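/- arXiv:0705.0269 — 6 statements merged into one kernel-verified Lean document; each statement's English description precedes it below -/
import Mathlib

section
/- Let X be a real n×k matrix with columns x_1, …, x_k and r ∈ ℝ^n, and suppose Xᵀr = c·𝟙 for some c > 0 (all columns have equal correlation c with r). Let θ̂ minimize ‖r − Xθ‖₂² over θ ∈ ℝ^k with θ ≥ 0 componentwise, and suppose θ̂ ≠ 0. Set ρ̂ = θ̂ / (𝟙ᵀθ̂). Then for every ε > 0, ρ̂ minimizes ‖r − ε X ρ‖₂² over the simplex {ρ ∈ ℝ^k : ρ ≥ 0, 𝟙ᵀρ = 1}. -/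
/-- Proof of Theorem 1 part 2 (Appendix A.1, problems (46) and (50)): if all columns of `X`
have equal correlation `c > 0` with `r` and `θ̂` is a nonzero nonnegative least squares fit
of `r` on `X`, then `ρ̂ = θ̂/(𝟙ᵀθ̂)` minimizes `‖r − εXρ‖₂²` over the simplex for every
`ε > 0`. -/
theorem stagewise_direction_solves_simplex_problem
    (n k : ℕ) (X : Matrix (Fin n) (Fin k) ℝ) (r : Fin n → ℝ) (c : ℝ) (hc : 0 < c)
    (hXr : ∀ j, ∑ i, X i j * r i = c)
    (θ : Fin k → ℝ) (hθnn : ∀ j, 0 ≤ θ j)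
    (hθmin : ∀ θ' : Fin k → ℝ, (∀ j, 0 ≤ θ' j) →
      ∑ i, (r i - X.mulVec θ i) ^ 2 ≤ ∑ i, (r i - X.mulVec θ' i) ^ 2)
    (hθne : θ ≠ 0) :
    ∀ ε : ℝ, 0 < ε → ∀ ρ : Fin k → ℝ, (∀ j, 0 ≤ ρ j) → ∑ j, ρ j = 1 →
      ∑ i, (r i - ε * X.mulVec ((∑ j, θ j)⁻¹ • θ) i) ^ 2 ≤
        ∑ i, (r i - ε * X.mulVec ρ i) ^ 2 := by
  intro ε hε ρ hρnn hρsum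
  set m : Fin n → ℝ := X.mulVec θ with hm
  have hs : 0 < ∑ j, θ j := by
    apply Finset.sum_pos' (fun j _ => hθnn j)
    obtain ⟨j, hj⟩ := Function.ne_iff.mp hθne
    exact ⟨j, Finset.mem_univ j, lt_of_le_of_ne (hθnn j) (Ne.symm hj)⟩
  -- swap sums
  have swap : ∀ (v : Fin k → ℝ) (w : Fin n → ℝ),
      ∑ i, X.mulVec v i * w i = ∑ j, v j * (∑ i, X i j * w i) := by
    intro v w
    simp only [Matrix.mulVec, dotProduct]
    calc ∑ i, (∑ j, X i j * v j) * w i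
        = ∑ i, ∑ j, X i j * v j * w i := by
          exact Finset.sum_congr rfl fun i _ => Finset.sum_mul _ _ _
      _ = ∑ j, ∑ i, X i j * v j * w i := Finset.sum_comm
      _ = ∑ j, v j * (∑ i, X i j * w i) := by
          refine Finset.sum_congr rfl fun j _ => ?_
          rw [Finset.mul_sum]
          exact Finset.sum_congr rfl fun i _ => by ring
  have hrX : ∀ v : Fin k → ℝ, ∑ i, X.mulVec v i * r i = (∑ j, v j) * c := by
    intro v
    rw [swap v r, Finset.sum_mul]
    exact Finset.sum_congr rfl fun j _ => by rw [hXr j]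
  set d : Fin k → ℝ := fun j => c - ∑ i, X i j * m i with hd
  -- perturbation inequality
  have pert : ∀ (j : Fin k) (t : ℝ), 0 ≤ θ j + t →
      0 ≤ -(2*t*(d j)) + t^2 * ∑ i, (X i j)^2 := by
    intro j t ht
    have hup : Function.update θ j (θ j + t) = θ + t • ((Pi.single j 1 : Fin k → ℝ)) := by
      funext j'
      by_cases h : j' = j
      · subst h; simp
      · simp [Function.update_of_ne h, Pi.single_apply, h]
    have hnn' : ∀ j', 0 ≤ Function.update θ j (θ j + t) j' := by
      intro j'
      by_cases h : j' = j
      · subst h; simpa using ht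
      · simpa [Function.update_of_ne h] using hθnn j'
    have hmv : ∀ i, X.mulVec (Function.update θ j (θ j + t)) i = m i + t * X i j := by
      intro i
      rw [hup, Matrix.mulVec_add, Matrix.mulVec_smul, Matrix.mulVec_single]
      simp [hm, mul_comm]
    have hdj : ∑ i, X i j * (r i - m i) = d j := by
      rw [hd]
      have h0 : ∑ i, X i j * (r i - m i) = (∑ i, X i j * r i) - ∑ i, X i j * m i := by
        rw [← Finset.sum_sub_distrib]
        exact Finset.sum_congr rfl fun i _ => by ring
      rw [h0, hXr j]
    have hid : ∑ i, (r i - X.mulVec (Function.update θ j (θ j + t)) i)^2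
        = (∑ i, (r i - m i)^2) + (-(2*t*(d j)) + t^2 * ∑ i, (X i j)^2) := by
      calc ∑ i, (r i - X.mulVec (Function.update θ j (θ j + t)) i)^2
          = ∑ i, ((r i - m i)^2 + (-(2*t*(X i j * (r i - m i))) + t^2 * (X i j)^2)) := by
            refine Finset.sum_congr rfl fun i _ => ?_
            rw [hmv i]; ring
        _ = (∑ i, (r i - m i)^2) + (-(2*t*∑ i, X i j * (r i - m i)) + t^2 * ∑ i, (X i j)^2) := by
            rw [Finset.sum_add_distrib, Finset.sum_add_distrib, Finset.mul_sum, Finset.mul_sum,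
              ← Finset.sum_neg_distrib]
        _ = (∑ i, (r i - m i)^2) + (-(2*t*(d j)) + t^2 * ∑ i, (X i j)^2) := by rw [hdj]
    have := hθmin _ hnn'
    rw [hid] at this
    linarith
  have hq : ∀ j, (0:ℝ) ≤ ∑ i, (X i j)^2 := fun j => Finset.sum_nonneg fun i _ => sq_nonneg _
  -- KKT: d j ≤ 0
  have kkt1 : ∀ j, d j ≤ 0 := by
    intro j
    by_contra h
    push_neg at h
    set q := ∑ i, (X i j)^2 with hqd
    have hqpos : 0 < q + 1 := by linarith [hq j]
    have ht : (0:ℝ) < d j / (q + 1) := div_pos h hqpos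
    have := pert j (d j / (q + 1)) (by linarith [hθnn j])
    have h1 : d j / (q + 1) * q < 2 * d j := by
      rw [div_mul_eq_mul_div, div_lt_iff₀ hqpos]
      nlinarith [hq j]
    nlinarith
  -- KKT: θ j > 0 → d j = 0
  have kkt2 : ∀ j, 0 < θ j → d j = 0 := by
    intro j hθj
    refine le_antisymm (kkt1 j) ?_
    by_contra h
    push_neg at h
    set q := ∑ i, (X i j)^2 with hqd
    have hqpos : 0 < q + 1 := by linarith [hq j]
    set t := max (-θ j) (d j / (q + 1)) with htd
    have htneg : t < 0 := max_lt (by linarith) (div_neg_of_neg_of_pos h hqpos)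
    have htge : -θ j ≤ t := le_max_left _ _
    have hpt := pert j t (by linarith)
    have h2 : d j / (q + 1) ≤ t := le_max_right _ _
    have h3 : d j ≤ d j / (q + 1) * q := by
      rw [div_mul_eq_mul_div, le_div_iff₀ hqpos]
      nlinarith [hq j]
    have h1 : d j ≤ t * q := h3.trans (mul_le_mul_of_nonneg_right h2 (hq j))
    nlinarith [mul_pos (neg_pos.mpr htneg) (show (0:ℝ) < t * q - 2 * d j by linarith)]
  have hθd : ∀ j, θ j * d j = 0 := by
    intro j
    rcases eq_or_lt_of_le (hθnn j) with h | h
    · rw [← h, zero_mul]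
    · rw [kkt2 j h, mul_zero]
  -- ‖Xθ‖² = c * s
  have hmm : ∑ i, m i ^ 2 = c * ∑ j, θ j := by
    have h1 : ∑ i, m i * m i = ∑ j, θ j * (c - d j) := by
      rw [hm, swap θ m]
      exact Finset.sum_congr rfl fun j _ => by rw [hd]; ring_nf
    have h2 : ∑ j, θ j * (c - d j) = ∑ j, θ j * c := by
      refine Finset.sum_congr rfl fun j _ => ?_
      nlinarith [hθd j]
    calc ∑ i, m i ^ 2 = ∑ i, m i * m i := Finset.sum_congr rfl fun i _ => sq (m i)
      _ = ∑ j, θ j * c := h1.trans h2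
      _ = c * ∑ j, θ j := by rw [← Finset.sum_mul, mul_comm]
  -- ⟨Xρ, Xθ⟩ ≥ c
  have hip : c ≤ ∑ i, X.mulVec ρ i * m i := by
    rw [swap ρ m]
    have hle : ∑ j, ρ j * c ≤ ∑ j, ρ j * (c - d j) := by
      refine Finset.sum_le_sum fun j _ => ?_
      nlinarith [kkt1 j, hρnn j]
    have heq : ∑ j, ρ j * c = c := by rw [← Finset.sum_mul, hρsum, one_mul]
    have heq2 : ∑ j, ρ j * (∑ i, X i j * m i) = ∑ j, ρ j * (c - d j) := by
      refine Finset.sum_congr rfl fun j _ => ?_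
      rw [hd]; ring_nf
    rw [heq2]; linarith
  -- Cauchy-Schwarz: c/s ≤ ‖Xρ‖²
  have hcs : c / (∑ j, θ j) ≤ ∑ i, (X.mulVec ρ i)^2 := by
    have h1 := Finset.sum_mul_sq_le_sq_mul_sq Finset.univ (fun i => X.mulVec ρ i) m
    have h2 : c^2 ≤ (∑ i, X.mulVec ρ i * m i)^2 := by
      have hpos : 0 < ∑ i, X.mulVec ρ i * m i := lt_of_lt_of_le hc hip
      nlinarith
    rw [hmm] at h1
    rw [div_le_iff₀ hs]
    nlinarith
  -- ρ̂ values
  have hrho : ∀ i, X.mulVec ((∑ j, θ j)⁻¹ • θ) i = (∑ j, θ j)⁻¹ * m i := by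
    intro i
    rw [Matrix.mulVec_smul]
    simp [hm]
  have hrhosum : ∑ j, ((∑ j, θ j)⁻¹ • θ) j = 1 := by
    simp only [Pi.smul_apply, smul_eq_mul, ← Finset.mul_sum]
    exact inv_mul_cancel₀ hs.ne'
  have hL : ∑ i, (X.mulVec ((∑ j, θ j)⁻¹ • θ) i)^2 = c / (∑ j, θ j) := by
    calc ∑ i, (X.mulVec ((∑ j, θ j)⁻¹ • θ) i)^2
        = ∑ i, ((∑ j, θ j)⁻¹)^2 * (m i)^2 := by
          refine Finset.sum_congr rfl fun i _ => ?_
          rw [hrho i]; ring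
      _ = ((∑ j, θ j)⁻¹)^2 * (c * ∑ j, θ j) := by rw [← Finset.mul_sum, hmm]
      _ = c / (∑ j, θ j) := by field_simp
  -- expand both sides
  have expand : ∀ w : Fin n → ℝ,
      ∑ i, (r i - ε * w i)^2
        = (∑ i, (r i)^2) - 2*ε*(∑ i, w i * r i) + ε^2 * ∑ i, (w i)^2 := by
    intro w
    rw [Finset.mul_sum, Finset.mul_sum, ← Finset.sum_sub_distrib, ← Finset.sum_add_distrib]
    exact Finset.sum_congr rfl fun i _ => by ring
  rw [expand (X.mulVec ((∑ j, θ j)⁻¹ • θ)), expand (X.mulVec ρ), hrX, hrX, hrhosum, hρsum, hL]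
  have : ε^2 * (c / (∑ j, θ j)) ≤ ε^2 * ∑ i, (X.mulVec ρ i)^2 :=
    mul_le_mul_of_nonneg_left hcs (sq_nonneg ε)
  linarith
end

section
/- Let X be a real n×k matrix and r ∈ ℝ^n with Xᵀr = c·𝟙 for some c > 0. Let θ̂ minimize ‖r − Xθ‖₂² over θ ≥ 0 componentwise, with θ̂ ≠ 0, and set ρ̂ = θ̂ / (𝟙ᵀθ̂). Then ρ̂ minimizes dᵀ XᵀX d over the simplex {d ∈ ℝ^k : d ≥ 0, 𝟙ᵀd = 1}. That is, the normalized nonnegative least squares direction minimizes the second derivative of the residual sum of squares with respect to L1 arc-length among nonnegative unit-L1 directions. -/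
open Finset

/-- If `a*t + b*t^2 ≥ 0` for all small positive `t`, then `a ≥ 0`. -/
lemma small_t_nonneg {a b ε : ℝ} (hε : 0 < ε)
    (h : ∀ t : ℝ, 0 < t → t ≤ ε → 0 ≤ a * t + b * t ^ 2) : 0 ≤ a := by
  by_contra ha
  push_neg at ha
  rcases le_or_gt b 0 with hb | hb
  · have := h ε hε le_rfl
    nlinarith
  · set t := min ε (-a / (2 * b)) with ht
    have ht0 : 0 < t := lt_min hε (div_pos (by linarith) (by linarith))
    have htb : t ≤ -a / (2 * b) := min_le_right _ _
    have := h t ht0 (min_le_left _ _)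
    rw [le_div_iff₀ (by linarith)] at htb
    nlinarith [mul_pos ht0 ht0]

/-- First-order condition for a constrained minimizer of the residual sum of
squares along a direction `v` that is feasible for small step sizes. -/
lemma perturb_nonneg {n k : ℕ} (X : Matrix (Fin n) (Fin k) ℝ) (r : Fin n → ℝ)
    (θ : Fin k → ℝ)
    (hθmin : ∀ θ' : Fin k → ℝ, (∀ j, 0 ≤ θ' j) →
      ∑ i, (r i - X.mulVec θ i) ^ 2 ≤ ∑ i, (r i - X.mulVec θ' i) ^ 2)
    (v : Fin k → ℝ) (ε : ℝ) (hε : 0 < ε)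
    (hfeas : ∀ t : ℝ, 0 < t → t ≤ ε → ∀ j, 0 ≤ θ j + t * v j) :
    0 ≤ ∑ i, X.mulVec v i * (X.mulVec θ i - r i) := by
  have key : ∀ t : ℝ, 0 < t → t ≤ ε →
      0 ≤ (2 * ∑ i, X.mulVec v i * (X.mulVec θ i - r i)) * t
        + (∑ i, (X.mulVec v i) ^ 2) * t ^ 2 := by
    intro t ht0 htε
    have hfe : ∀ j, 0 ≤ (θ + t • v) j := by
      intro j; simpa [mul_comm] using hfeas t ht0 htε j
    have h1 := hθmin (θ + t • v) hfe
    have hmv : ∀ i, X.mulVec (θ + t • v) i = X.mulVec θ i + t * X.mulVec v i := by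
      intro i
      rw [Matrix.mulVec_add, Matrix.mulVec_smul]
      simp
    have expand : ∑ i, (r i - X.mulVec (θ + t • v) i) ^ 2
        = ∑ i, (r i - X.mulVec θ i) ^ 2
          + (2 * ∑ i, X.mulVec v i * (X.mulVec θ i - r i)) * t
          + (∑ i, (X.mulVec v i) ^ 2) * t ^ 2 := by
      have : ∀ i, (r i - X.mulVec (θ + t • v) i) ^ 2
          = (r i - X.mulVec θ i) ^ 2
            + (2 * (X.mulVec v i * (X.mulVec θ i - r i))) * t
            + (X.mulVec v i) ^ 2 * t ^ 2 := by
        intro i; rw [hmv i]; ring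
      rw [Finset.sum_congr rfl fun i _ => this i]
      rw [Finset.sum_add_distrib, Finset.sum_add_distrib, ← Finset.sum_mul,
        ← Finset.sum_mul, ← Finset.mul_sum]
    rw [expand] at h1
    linarith
  have := small_t_nonneg hε key
  linarith

/-- The quadratic form of `XᵀX` equals an inner product of images under `X`. -/
lemma quad_eq {n k : ℕ} (X : Matrix (Fin n) (Fin k) ℝ) (u v : Fin k → ℝ) :
    ∑ j, v j * ((X.transpose * X).mulVec u) j
      = ∑ i, X.mulVec u i * X.mulVec v i := by
  have hA : ∀ j, ((X.transpose * X).mulVec u) j = ∑ i, X i j * X.mulVec u i := by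
    intro j
    rw [← Matrix.mulVec_mulVec]
    simp [Matrix.mulVec, dotProduct, Matrix.transpose_apply]
  simp only [hA]
  calc ∑ j, v j * ∑ i, X i j * X.mulVec u i
      = ∑ j, ∑ i, v j * (X i j * X.mulVec u i) := by
        simp [Finset.mul_sum]
    _ = ∑ i, ∑ j, v j * (X i j * X.mulVec u i) := Finset.sum_comm
    _ = ∑ i, X.mulVec u i * X.mulVec v i := by
        refine Finset.sum_congr rfl fun i _ => ?_
        have hv : X.mulVec v i = ∑ j, X i j * v j := by
          simp [Matrix.mulVec, dotProduct]
        rw [hv, Finset.mul_sum]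
        exact Finset.sum_congr rfl fun j _ => by ring

/-- Proof of Theorem 2 (monotone lasso), problem (18): under equal correlations
`Xᵀr = c𝟙` with `c > 0`, the normalized nonnegative least squares direction
`ρ̂ = θ̂/(𝟙ᵀθ̂)` minimizes the Hessian quadratic form `dᵀXᵀXd` over the simplex
`{d : d ≥ 0, 𝟙ᵀd = 1}`. -/
theorem stagewise_direction_minimizes_hessian
    (n k : ℕ) (X : Matrix (Fin n) (Fin k) ℝ) (r : Fin n → ℝ) (c : ℝ) (hc : 0 < c)
    (hXr : ∀ j, ∑ i, X i j * r i = c)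
    (θ : Fin k → ℝ) (hθnn : ∀ j, 0 ≤ θ j)
    (hθmin : ∀ θ' : Fin k → ℝ, (∀ j, 0 ≤ θ' j) →
      ∑ i, (r i - X.mulVec θ i) ^ 2 ≤ ∑ i, (r i - X.mulVec θ' i) ^ 2)
    (hθne : θ ≠ 0) :
    ∀ d : Fin k → ℝ, (∀ j, 0 ≤ d j) → ∑ j, d j = 1 →
      ∑ j, ((∑ l, θ l)⁻¹ • θ) j *
          ((X.transpose * X).mulVec ((∑ l, θ l)⁻¹ • θ)) j ≤
        ∑ j, d j * ((X.transpose * X).mulVec d) j := by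
  intro d hdnn hdsum
  set s : ℝ := ∑ l, θ l with hs_def
  have hs : 0 < s := by
    obtain ⟨j, hj⟩ : ∃ j, θ j ≠ 0 := by
      by_contra h
      push_neg at h
      exact hθne (funext h)
    exact Finset.sum_pos' (fun l _ => hθnn l)
      ⟨j, Finset.mem_univ j, lt_of_le_of_ne (hθnn j) (Ne.symm hj)⟩
  -- `g j = (XᵀXθ)_j`
  set g : Fin k → ℝ := fun j => ∑ i, X i j * X.mulVec θ i with hg_def
  -- KKT: `g j ≥ c` for all j
  have hKKT1 : ∀ j, c ≤ g j := by
    intro j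
    have := perturb_nonneg X r θ hθmin (Pi.single j 1) 1 one_pos
      (fun t ht0 _ l => by
        rcases eq_or_ne l j with rfl | hlj
        · simp only [Pi.single_eq_same]
          nlinarith [hθnn l]
        · simp only [Pi.single_eq_of_ne hlj, mul_zero, add_zero]
          exact hθnn l)
    have hmv : ∀ i, X.mulVec (Pi.single j 1) i = X i j := by
      intro i
      simp [Matrix.mulVec, dotProduct, Pi.single_apply, mul_comm]
    rw [Finset.sum_congr rfl fun i _ => by rw [hmv i]] at this
    have hexp : ∑ i, X i j * (X.mulVec θ i - r i) = g j - c := by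
      rw [hg_def]
      simp only [mul_sub]
      rw [Finset.sum_sub_distrib, hXr j]
    rw [hexp] at this
    linarith
  -- complementary slackness: `θ j > 0 → g j ≤ c`
  have hKKT2 : ∀ j, 0 < θ j → g j ≤ c := by
    intro j hj
    have := perturb_nonneg X r θ hθmin (-Pi.single j 1) (θ j) hj
      (fun t ht0 htε l => by
        rcases eq_or_ne l j with rfl | hlj
        · simp only [Pi.neg_apply, Pi.single_eq_same]
          nlinarith
        · simp only [Pi.neg_apply, Pi.single_eq_of_ne hlj, neg_zero, mul_zero,
            add_zero]
          exact hθnn l)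
    have hmv : ∀ i, X.mulVec (-Pi.single j 1) i = -(X i j) := by
      intro i
      simp [Matrix.mulVec, dotProduct, Pi.single_apply, mul_comm]
    rw [Finset.sum_congr rfl fun i _ => by rw [hmv i]] at this
    have hexp : ∑ i, -(X i j) * (X.mulVec θ i - r i) = -(g j - c) := by
      have h' : ∑ i, -(X i j) * (X.mulVec θ i - r i)
          = -(∑ i, X i j * (X.mulVec θ i - r i)) := by
        rw [← Finset.sum_neg_distrib]
        exact Finset.sum_congr rfl fun i _ => by ring
      have h'' : ∑ i, X i j * (X.mulVec θ i - r i) = g j - c := by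
        rw [hg_def]
        simp only [mul_sub]
        rw [Finset.sum_sub_distrib, hXr j]
      rw [h', h'']
    rw [hexp] at this
    linarith
  -- `θᵀ(XᵀXθ) = c * s`
  have hquadθ : ∑ j, θ j * g j = c * s := by
    have : ∀ j, θ j * g j = θ j * c := by
      intro j
      rcases lt_or_eq_of_le (hθnn j) with hj | hj
      · rw [le_antisymm (hKKT2 j hj) (hKKT1 j)]
      · rw [← hj]; ring
    rw [Finset.sum_congr rfl fun j _ => this j, ← Finset.sum_mul, ← hs_def]
    ring
  -- identify `g` with the matrix-vector product
  have hA : ∀ j, ((X.transpose * X).mulVec θ) j = g j := by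
    intro j
    rw [← Matrix.mulVec_mulVec]
    simp [hg_def, Matrix.mulVec, dotProduct, Matrix.transpose_apply]
  -- `‖Xθ‖² = c * s`
  have hXθ : ∑ i, X.mulVec θ i * X.mulVec θ i = c * s := by
    have := quad_eq X θ θ
    simp only [hA] at this
    rw [← this, hquadθ]
  -- LHS equals `c / s`
  have hLHS : ∑ j, ((∑ l, θ l)⁻¹ • θ) j *
      ((X.transpose * X).mulVec ((∑ l, θ l)⁻¹ • θ)) j = c / s := by
    have hsm : (X.transpose * X).mulVec (s⁻¹ • θ) = s⁻¹ • (X.transpose * X).mulVec θ :=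
      Matrix.mulVec_smul _ _ _
    have : ∑ j, (s⁻¹ • θ) j * ((X.transpose * X).mulVec (s⁻¹ • θ)) j
        = s⁻¹ * s⁻¹ * ∑ j, θ j * g j := by
      rw [hsm, Finset.mul_sum]
      refine Finset.sum_congr rfl fun j _ => ?_
      simp only [Pi.smul_apply, smul_eq_mul, hA j]
      ring
    rw [← hs_def]
    rw [this, hquadθ]
    field_simp
  rw [hLHS]
  -- `dᵀ(XᵀXθ) = ∑ d_j g_j ≥ c`
  have hdg : c ≤ ∑ i, X.mulVec θ i * X.mulVec d i := by
    have h1 := quad_eq X θ d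
    simp only [hA] at h1
    rw [← h1]
    calc c = ∑ j, d j * c := by rw [← Finset.sum_mul, hdsum, one_mul]
      _ ≤ ∑ j, d j * g j :=
        Finset.sum_le_sum fun j _ => mul_le_mul_of_nonneg_left (hKKT1 j) (hdnn j)
  -- Cauchy–Schwarz
  have hCS := Finset.sum_mul_sq_le_sq_mul_sq Finset.univ
    (fun i => X.mulVec θ i) (fun i => X.mulVec d i)
  have hRHS : ∑ j, d j * ((X.transpose * X).mulVec d) j
      = ∑ i, X.mulVec d i * X.mulVec d i := quad_eq X d d
  rw [hRHS]
  have hsq : ∀ i, X.mulVec θ i * X.mulVec θ i = (X.mulVec θ i) ^ 2 := fun i => (sq _).symm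
  have hsq2 : ∀ i, X.mulVec d i * X.mulVec d i = (X.mulVec d i) ^ 2 := fun i => (sq _).symm
  rw [Finset.sum_congr rfl fun i _ => hsq2 i]
  have hXθ2 : ∑ i, (X.mulVec θ i) ^ 2 = c * s := by
    rw [← Finset.sum_congr rfl fun i _ => hsq i, hXθ]
  rw [hXθ2] at hCS
  have hp2 : c ^ 2 ≤ (∑ i, X.mulVec θ i * X.mulVec d i) ^ 2 := by
    have := hdg
    nlinarith
  rw [div_le_iff₀ hs]
  nlinarith [hCS, hp2]
end

section
/- Let x_1, …, x_n ∈ ℝ and let t ≤ t' be real knots. Define u, v ∈ ℝ^n by u_i = 1 if x_i > t and 0 otherwise, and v_i = 1 if x_i > t' and 0 otherwise, and set n_t = #{i : x_i > t}, n_{t'} = #{i : x_i > t'}, assuming 0 < n_{t'} ≤ n_t < n. Then the Pearson correlation of u and v equals √( n_{t'} (n − n_t) / ( n_t (n − n_{t'}) ) ); equivalently, after standardizing each vector to have mean zero and unit sample variance, their normalized inner product equals √( ((n − n_t)/n_t) · ( n_{t'} / (n − n_{t'}) ) ). -/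
private lemma corr_algebra (a b N : ℝ) (hb0 : 0 < b) (hab : b ≤ a) (haN : a < N) :
    b * (N - a) / N / (Real.sqrt (a * (N - a) / N) * Real.sqrt (b * (N - b) / N)) =
      Real.sqrt (b * (N - a) / (a * (N - b))) := by
  have ha0 : 0 < a := lt_of_lt_of_le hb0 hab
  have hN0 : (0 : ℝ) < N := lt_trans ha0 haN
  have hbN : b < N := lt_of_le_of_lt hab haN
  have hDu : (0 : ℝ) < a * (N - a) / N := div_pos (mul_pos ha0 (by linarith)) hN0
  have hDv : (0 : ℝ) < b * (N - b) / N := div_pos (mul_pos hb0 (by linarith)) hN0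
  have hD : (0 : ℝ) < Real.sqrt (a * (N - a) / N) * Real.sqrt (b * (N - b) / N) :=
    mul_pos (Real.sqrt_pos.mpr hDu) (Real.sqrt_pos.mpr hDv)
  have hLHS0 : (0 : ℝ) ≤ b * (N - a) / N /
      (Real.sqrt (a * (N - a) / N) * Real.sqrt (b * (N - b) / N)) :=
    div_nonneg (div_nonneg (mul_nonneg hb0.le (by linarith)) hN0.le) hD.le
  have hsq : (b * (N - a) / N /
      (Real.sqrt (a * (N - a) / N) * Real.sqrt (b * (N - b) / N))) ^ 2
      = b * (N - a) / (a * (N - b)) := by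
    rw [div_pow, mul_pow, Real.sq_sqrt hDu.le, Real.sq_sqrt hDv.le]
    have h1 : N - a ≠ 0 := by linarith
    have h2 : N - b ≠ 0 := by linarith
    have h3 : N ≠ 0 := ne_of_gt hN0
    have h4 : a ≠ 0 := ne_of_gt ha0
    have h5 : b ≠ 0 := ne_of_gt hb0
    field_simp
  rw [← hsq, Real.sqrt_sq hLHS0]

open Finset in
/-- Gram matrix computation in the proof of Theorem 3 (Appendix A.2): for indicator
predictors `u = I(x > t)`, `v = I(x > t')` with `t ≤ t'` and `0 < n_{t'} ≤ n_t < n`,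
the Pearson correlation of `u` and `v` equals `√(n_{t'}(n − n_t)/(n_t(n − n_{t'})))`. -/
theorem indicator_basis_correlation
    (n : ℕ) (x : Fin n → ℝ) (t t' : ℝ) (htt : t ≤ t') :
    let u : Fin n → ℝ := fun i => if t < x i then 1 else 0
    let v : Fin n → ℝ := fun i => if t' < x i then 1 else 0
    let nt : ℕ := (univ.filter fun i => t < x i).card
    let nt' : ℕ := (univ.filter fun i => t' < x i).card
    0 < nt' → nt' ≤ nt → nt < n →
    let ub : ℝ := (∑ i, u i) / n
    let vb : ℝ := (∑ i, v i) / n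
    (∑ i, (u i - ub) * (v i - vb)) /
        (Real.sqrt (∑ i, (u i - ub) ^ 2) * Real.sqrt (∑ i, (v i - vb) ^ 2)) =
      Real.sqrt (((nt' : ℝ) * ((n : ℝ) - (nt : ℝ))) /
        ((nt : ℝ) * ((n : ℝ) - (nt' : ℝ)))) := by
  intro u v nt nt' h1 h2 h3 ub vb
  have hb0 : (0 : ℝ) < (nt' : ℝ) := by exact_mod_cast h1
  have hab : (nt' : ℝ) ≤ (nt : ℝ) := by exact_mod_cast h2
  have haN : (nt : ℝ) < (n : ℝ) := by exact_mod_cast h3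
  have hN0 : (0 : ℝ) < (n : ℝ) := lt_trans (lt_of_lt_of_le hb0 hab) haN
  have hsu : ∑ i, u i = (nt : ℝ) := by
    simp [u, nt, Finset.sum_boole]
  have hsv : ∑ i, v i = (nt' : ℝ) := by
    simp [v, nt', Finset.sum_boole]
  have huv : ∀ i, u i * v i = v i := by
    intro i
    simp only [u, v]
    by_cases h : t' < x i
    · simp [h, lt_of_le_of_lt htt h]
    · simp [h]
  have hu2 : ∀ i, u i ^ 2 = u i := by
    intro i; simp only [u]; split_ifs <;> norm_num
  have hv2 : ∀ i, v i ^ 2 = v i := by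
    intro i; simp only [v]; split_ifs <;> norm_num
  have hub : ub = (nt : ℝ) / n := by simp [ub, hsu]
  have hvb : vb = (nt' : ℝ) / n := by simp [vb, hsv]
  have hnum : ∑ i, (u i - ub) * (v i - vb) = (nt' : ℝ) * ((n : ℝ) - (nt : ℝ)) / n := by
    have e : ∀ i ∈ univ, (u i - ub) * (v i - vb)
        = u i * v i - ub * v i - vb * u i + ub * vb := fun i _ => by ring
    rw [Finset.sum_congr rfl e]
    rw [Finset.sum_congr rfl fun i _ => by rw [huv i]]
    simp only [Finset.sum_add_distrib, Finset.sum_sub_distrib, ← Finset.mul_sum,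
      Finset.sum_const, Finset.card_univ, Fintype.card_fin, nsmul_eq_mul, hsu, hsv, hub, hvb]
    field_simp
    ring
  have hdu : ∑ i, (u i - ub) ^ 2 = (nt : ℝ) * ((n : ℝ) - (nt : ℝ)) / n := by
    have e : ∀ i ∈ univ, (u i - ub) ^ 2 = u i ^ 2 - 2 * ub * u i + ub ^ 2 :=
      fun i _ => by ring
    rw [Finset.sum_congr rfl e, Finset.sum_congr rfl fun i _ => by rw [hu2 i]]
    simp only [Finset.sum_add_distrib, Finset.sum_sub_distrib, ← Finset.mul_sum,
      Finset.sum_const, Finset.card_univ, Fintype.card_fin, nsmul_eq_mul, hsu, hub]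
    field_simp
    ring
  have hdv : ∑ i, (v i - vb) ^ 2 = (nt' : ℝ) * ((n : ℝ) - (nt' : ℝ)) / n := by
    have e : ∀ i ∈ univ, (v i - vb) ^ 2 = v i ^ 2 - 2 * vb * v i + vb ^ 2 :=
      fun i _ => by ring
    rw [Finset.sum_congr rfl e, Finset.sum_congr rfl fun i _ => by rw [hv2 i]]
    simp only [Finset.sum_add_distrib, Finset.sum_sub_distrib, ← Finset.mul_sum,
      Finset.sum_const, Finset.card_univ, Fintype.card_fin, nsmul_eq_mul, hsv, hvb]
    field_simp
    ring
  rw [hnum, hdu, hdv]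
  exact corr_algebra _ _ _ hb0 hab haN
end

section
/- Let u, v, w be reals with 0 ≤ u < v < w. Then v(w − u) / ((v − u)(w − v)) − √(v u)/(v − u) − √(w v)/(w − v) ≥ 0. -/
/-- Diagonal-dominance inequality for each row of the tridiagonal inverse in the proof of
Theorem 3 (Appendix A.2): for `0 ≤ u < v < w`,
`v(w−u)/((v−u)(w−v)) − √(vu)/(v−u) − √(wv)/(w−v) ≥ 0`. -/
theorem tridiagonal_row_sum_nonneg
    (u v w : ℝ) (hu : 0 ≤ u) (huv : u < v) (hvw : v < w) :
    0 ≤ v * (w - u) / ((v - u) * (w - v)) -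
        Real.sqrt (v * u) / (v - u) - Real.sqrt (w * v) / (w - v) := by
  have hv : (0:ℝ) ≤ v := le_trans hu huv.le
  have hw : (0:ℝ) ≤ w := le_trans hv hvw.le
  have h1 : (0:ℝ) < v - u := by linarith
  have h2 : (0:ℝ) < w - v := by linarith
  have key : 0 ≤ v*(w-u) - Real.sqrt (v*u)*(w-v) - Real.sqrt (w*v)*(v-u) := by
    set a := Real.sqrt u with ha
    set b := Real.sqrt v with hb
    set c := Real.sqrt w with hc
    have hua : a^2 = u := Real.sq_sqrt hu
    have hvb : b^2 = v := Real.sq_sqrt hv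
    have hwc : c^2 = w := Real.sq_sqrt hw
    have hab : a ≤ b := Real.sqrt_le_sqrt huv.le
    have hbc : b ≤ c := Real.sqrt_le_sqrt hvw.le
    have ha0 : 0 ≤ a := Real.sqrt_nonneg u
    have hb0 : 0 ≤ b := Real.sqrt_nonneg v
    have e1 : Real.sqrt (v*u) = b*a := Real.sqrt_mul hv u
    have e2 : Real.sqrt (w*v) = c*b := Real.sqrt_mul hw v
    rw [e1, e2, ← hua, ← hvb, ← hwc]
    nlinarith [mul_nonneg (mul_nonneg (sub_nonneg.2 hab) (sub_nonneg.2 hbc)) (sub_nonneg.2 (hab.trans hbc)), mul_nonneg hb0 (mul_nonneg (mul_nonneg (sub_nonneg.2 hab) (sub_nonneg.2 hbc)) (sub_nonneg.2 (hab.trans hbc)))]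
  have heq : v * (w - u) / ((v - u) * (w - v)) -
      Real.sqrt (v * u) / (v - u) - Real.sqrt (w * v) / (w - v)
      = (v*(w-u) - Real.sqrt (v*u)*(w-v) - Real.sqrt (w*v)*(v-u)) / ((v-u)*(w-v)) := by
    field_simp
  rw [heq]
  exact div_nonneg key (by positivity)
end

section
/- Let 0 < v_1 < v_2 < … < v_k be reals and let M be the k×k matrix with M_{ij} = √( v_{min(i,j)} / v_{max(i,j)} ). Then every row sum of M⁻¹ is nonnegative: (M⁻¹ 𝟙)_j ≥ 0 for every j, where 𝟙 is the all-ones vector. Moreover all off-diagonal entries of M⁻¹ are nonpositive. -/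
/-!
Write `s = √v`. Then `M = diag(s)⁻¹ G diag(s)⁻¹`, where `G i j = min (v i) (v j)` is the Brownian
covariance. Since `G = L diag(d) Lᵀ`, with `L` the lower-triangular all-ones matrix and `d` the
increments of `v` (with `v₀ = 0`), its inverse is `Δᵀ diag(d)⁻¹ Δ` for the backward difference
`Δ = L⁻¹`. An off-diagonal entry of this is `∑ₙ Δₙᵢ Δₙⱼ / dₙ`, a sum of nonpositive terms because
two distinct entries of a row of `Δ` never have the same sign. For the row sums,
`(M⁻¹ 𝟙)ⱼ = sⱼ (Δᵀ q)ⱼ = sⱼ (qⱼ - qⱼ₊₁)` with `qₙ = (sₙ - sₙ₋₁) / (vₙ - vₙ₋₁) = 1 / (sₙ + sₙ₋₁)`,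
which decreases in `n`: the slopes of the concave function `√` decrease.
-/

namespace BrownianGram

open Matrix

variable {R : Type*} {k : ℕ}

section Shift

variable [Zero R]

/-- The paper's convention `v_0 = 0`, shifted to `0`-based indices. -/
def predOrZero (g : Fin k → R) (n : Fin k) : R :=
  if h : (n : ℕ) = 0 then 0 else g ⟨n - 1, by omega⟩

def succOrZero (g : Fin k → R) (n : Fin k) : R :=
  if h : (n : ℕ) + 1 < k then g ⟨n + 1, h⟩ else 0

theorem predOrZero_comp {S : Type*} [Zero S] (φ : R → S) (hφ : φ 0 = 0) (g : Fin k → R)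
    (n : Fin k) : predOrZero (φ ∘ g) n = φ (predOrZero g n) := by
  unfold predOrZero; split_ifs <;> simp [hφ]

theorem predOrZero_mk_succ (g : Fin k → R) (j : ℕ) (hj : j + 1 < k) :
    predOrZero g ⟨j + 1, hj⟩ = g ⟨j, by omega⟩ :=
  dif_neg (Nat.succ_ne_zero j)

end Shift

section AddCommMonoid

variable [AddCommMonoid R]

theorem sum_ite_eq_predOrZero (g : Fin k → R) (n : Fin k) :
    ∑ l : Fin k, (if (n : ℕ) = l + 1 then g l else 0) = predOrZero g n := by
  unfold predOrZero
  split_ifs with hn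
  · exact Finset.sum_eq_zero fun l _ => if_neg (by omega)
  · rw [Finset.sum_eq_single ⟨n - 1, by omega⟩
      (fun l _ hl => if_neg fun h => hl (by ext; simp; omega)) (by simp)]
    exact if_pos (by simp; omega)

theorem sum_ite_eq_succOrZero (g : Fin k → R) (j : Fin k) :
    ∑ n : Fin k, (if (n : ℕ) = j + 1 then g n else 0) = succOrZero g j := by
  unfold succOrZero
  split_ifs with hj
  · rw [Finset.sum_eq_single ⟨j + 1, hj⟩ (fun n _ hn => if_neg fun h => hn (Fin.ext h))
      (by simp)]
    exact if_pos rfl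
  · exact Finset.sum_eq_zero fun n _ => if_neg (by omega)

end AddCommMonoid

section Ring

variable [Ring R]

def diffMatrix (k : ℕ) : Matrix (Fin k) (Fin k) R :=
  of fun n l => if n = l then 1 else if (n : ℕ) = l + 1 then -1 else 0

theorem diffMatrix_mulVec_apply (g : Fin k → R) (n : Fin k) :
    (diffMatrix k *ᵥ g) n = g n - predOrZero g n := by
  have hterm : ∀ l, diffMatrix k n l * g l =
      (if n = l then g l else 0) - (if (n : ℕ) = l + 1 then g l else 0) := by
    intro l
    by_cases h : n = l
    · subst h; simp [diffMatrix]
    · simp only [diffMatrix, of_apply, h, if_false]; split_ifs <;> simp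
  simp only [mulVec, dotProduct, hterm, Finset.sum_sub_distrib, Finset.sum_ite_eq,
    Finset.mem_univ, if_true, sum_ite_eq_predOrZero]

theorem vecMul_diffMatrix_apply (g : Fin k → R) (j : Fin k) :
    (g ᵥ* diffMatrix k) j = g j - succOrZero g j := by
  have hterm : ∀ n, g n * diffMatrix k n j =
      (if n = j then g n else 0) - (if (n : ℕ) = j + 1 then g n else 0) := by
    intro n
    by_cases h : n = j
    · subst h; simp [diffMatrix]
    · simp only [diffMatrix, of_apply, h, if_false]; split_ifs <;> simp
  simp only [vecMul, dotProduct, hterm, Finset.sum_sub_distrib, Finset.sum_ite_eq',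
    Finset.mem_univ, if_true, sum_ite_eq_succOrZero]

def lowerOnes (k : ℕ) : Matrix (Fin k) (Fin k) R :=
  of fun i n => if n ≤ i then 1 else 0

theorem lowerOnes_mul_diffMatrix : lowerOnes k * diffMatrix k = (1 : Matrix (Fin k) (Fin k) R) := by
  ext i j
  rw [mul_apply_eq_vecMul, vecMul_diffMatrix_apply, one_apply]
  simp only [lowerOnes, of_apply, succOrZero]
  split_ifs <;>
    first | (simp; done) | (exfalso; simp only [Fin.le_def, Fin.ext_iff] at *; omega)

end Ring

section OrderedRing

variable [Ring R] [PartialOrder R] [IsOrderedRing R]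

theorem diffMatrix_mul_diffMatrix_nonpos (n : Fin k) {i j : Fin k} (hij : i ≠ j) :
    diffMatrix k n i * diffMatrix k n j ≤ (0 : R) := by
  simp only [diffMatrix, of_apply]
  split_ifs <;> first | omega | simp_all

end OrderedRing

section Order

variable [Zero R] [Preorder R] {v : Fin k → R}

theorem predOrZero_le (hnonneg : ∀ i, 0 ≤ v i) (hmono : Monotone v) (n : Fin k) :
    predOrZero v n ≤ v n := by
  unfold predOrZero
  split_ifs with hn
  · exact hnonneg n
  · exact hmono (Fin.mk_le_of_le_val (by omega))

theorem le_predOrZero (hmono : Monotone v) {i n : Fin k} (hin : i < n) :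
    v i ≤ predOrZero v n := by
  unfold predOrZero
  rw [dif_neg (by omega)]
  exact hmono (Fin.le_def.mpr (by simp; omega))

theorem predOrZero_nonneg (hnonneg : ∀ i, 0 ≤ v i) (n : Fin k) : 0 ≤ predOrZero v n := by
  unfold predOrZero
  split_ifs
  exacts [le_rfl, hnonneg _]

end Order

section Brownian

variable [Field R] [LinearOrder R] (v : Fin k → R)

def brownianCov : Matrix (Fin k) (Fin k) R :=
  of fun i j => min (v i) (v j)

def increments (n : Fin k) : R :=
  v n - predOrZero v n

def brownianPrecision : Matrix (Fin k) (Fin k) R :=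
  (diffMatrix k)ᵀ * diagonal (fun n => (increments v n)⁻¹) * diffMatrix k

variable {v}

theorem increments_pos [IsStrictOrderedRing R] (hpos : ∀ i, 0 < v i) (hmono : StrictMono v)
    (n : Fin k) : 0 < increments v n := by
  unfold increments predOrZero
  split_ifs with hn
  · simpa using hpos n
  · exact sub_pos.mpr (hmono (Fin.mk_lt_of_lt_val (by omega)))

theorem brownianCov_mul_diffMatrix_transpose (hnonneg : ∀ i, 0 ≤ v i) (hmono : Monotone v) :
    brownianCov v * (diffMatrix k)ᵀ = lowerOnes k * diagonal (increments v) := by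
  ext i n
  have hrow : (brownianCov v * (diffMatrix k)ᵀ : Matrix (Fin k) (Fin k) R) i n =
      (diffMatrix k *ᵥ (min (v i) ∘ v)) n := by
    simp only [mul_apply, mulVec, dotProduct, transpose_apply, brownianCov, of_apply, mul_comm,
      Function.comp_apply]
  rw [hrow, diffMatrix_mulVec_apply, mul_diagonal,
    predOrZero_comp (min (v i)) (min_eq_right (hnonneg i))]
  simp only [lowerOnes, of_apply, increments, Function.comp_apply]
  split_ifs with hni
  · rw [min_eq_right (hmono hni), min_eq_right ((predOrZero_le hnonneg hmono n).trans (hmono hni)),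
      one_mul]
  · rw [not_le] at hni
    rw [min_eq_left (hmono hni.le), min_eq_left (le_predOrZero hmono hni), sub_self, zero_mul]

theorem brownianCov_mul_brownianPrecision [IsStrictOrderedRing R] (hpos : ∀ i, 0 < v i)
    (hmono : StrictMono v) : brownianCov v * brownianPrecision v = 1 := by
  have hinc : diagonal (increments v) * diagonal (fun n => (increments v n)⁻¹) = 1 := by
    rw [diagonal_mul_diagonal, ← diagonal_one]
    exact congrArg diagonal (funext fun n => mul_inv_cancel₀ (increments_pos hpos hmono n).ne')
  calc brownianCov v * brownianPrecision v
      = lowerOnes k * (diagonal (increments v) * diagonal (fun n => (increments v n)⁻¹)) *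
          diffMatrix k := by
        simp only [brownianPrecision, ← Matrix.mul_assoc,
          brownianCov_mul_diffMatrix_transpose (fun i => (hpos i).le) hmono.monotone]
    _ = 1 := by rw [hinc, Matrix.mul_one, lowerOnes_mul_diffMatrix]

theorem brownianPrecision_apply_nonpos [IsStrictOrderedRing R] (hpos : ∀ i, 0 < v i)
    (hmono : StrictMono v) {i j : Fin k} (hij : i ≠ j) : brownianPrecision v i j ≤ 0 := by
  rw [brownianPrecision, mul_apply]
  refine Finset.sum_nonpos fun n _ => ?_
  rw [mul_diagonal, transpose_apply, mul_right_comm]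
  exact mul_nonpos_of_nonpos_of_nonneg (diffMatrix_mul_diffMatrix_nonpos n hij)
    (inv_nonneg.mpr (increments_pos hpos hmono n).le)

end Brownian

section Real

open Real

theorem sqrt_sub_sqrt_div_sub {a b : ℝ} (hb : 0 ≤ b) (hba : b < a) :
    (√a - √b) / (a - b) = (√a + √b)⁻¹ := by
  have hfactor : a - b = (√a - √b) * (√a + √b) := by
    linear_combination sq_sqrt hb - sq_sqrt (hb.trans hba.le)
  rw [hfactor, div_mul_cancel_left₀ (sub_pos.mpr (sqrt_lt_sqrt hb hba)).ne']

theorem sqrt_min_div_max {a b : ℝ} (ha : 0 < a) (hb : 0 < b) :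
    √(min a b / max a b) = (√a)⁻¹ * min a b * (√b)⁻¹ := by
  rcases le_total a b with h | h
  · rw [min_eq_left h, max_eq_right h, sqrt_div' _ hb.le]
    field_simp
    exact sq_sqrt ha.le
  · rw [min_eq_right h, max_eq_left h, sqrt_div' _ ha.le]
    field_simp
    exact sq_sqrt hb.le

variable {v : Fin k → ℝ}

theorem brownianPrecision_mulVec_sqrt_nonneg (hpos : ∀ i, 0 < v i) (hmono : StrictMono v)
    (j : Fin k) : 0 ≤ (brownianPrecision v *ᵥ sqrt ∘ v) j := by
  have hslope : diagonal (fun n => (increments v n)⁻¹) *ᵥ (diffMatrix k *ᵥ sqrt ∘ v) =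
      fun n => (√(v n) + √(predOrZero v n))⁻¹ := by
    ext n
    have hpred : predOrZero v n < v n := sub_pos.mp (increments_pos hpos hmono n)
    rw [mulVec_diagonal, diffMatrix_mulVec_apply, predOrZero_comp sqrt sqrt_zero, increments,
      inv_mul_eq_div, Function.comp_apply,
      sqrt_sub_sqrt_div_sub (predOrZero_nonneg (fun i => (hpos i).le) n) hpred]
  rw [brownianPrecision, ← mulVec_mulVec, ← mulVec_mulVec, hslope, mulVec_transpose,
    vecMul_diffMatrix_apply, sub_nonneg, succOrZero]
  split_ifs with hj
  · have hpred : predOrZero v j ≤ v ⟨j + 1, hj⟩ :=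
      (predOrZero_le (fun i => (hpos i).le) hmono.monotone j).trans
        (hmono.monotone (Fin.mk_le_of_le_val (Nat.le_succ j)))
    rw [predOrZero_mk_succ, Fin.eta]
    exact inv_anti₀ (add_pos_of_pos_of_nonneg (sqrt_pos.mpr (hpos j)) (sqrt_nonneg _))
      (by linarith [sqrt_le_sqrt hpred])
  · positivity

theorem inv_eq_diagonal_mul_brownianPrecision_mul_diagonal (hpos : ∀ i, 0 < v i)
    (hmono : StrictMono v) (M : Matrix (Fin k) (Fin k) ℝ)
    (hM : ∀ i j, M i j = √(v (min i j) / v (max i j))) :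
    M⁻¹ = diagonal (sqrt ∘ v) * brownianPrecision v * diagonal (sqrt ∘ v) := by
  have hsqrt : ∀ i, (sqrt ∘ v) i ≠ 0 := fun i => (sqrt_pos.mpr (hpos i)).ne'
  have hconj : M = diagonal (sqrt ∘ v)⁻¹ * brownianCov v * diagonal (sqrt ∘ v)⁻¹ := by
    ext i j
    rw [hM, mul_diagonal, diagonal_mul, hmono.monotone.map_min, hmono.monotone.map_max,
      sqrt_min_div_max (hpos i) (hpos j)]
    rfl
  have hcancel : diagonal (sqrt ∘ v)⁻¹ * diagonal (sqrt ∘ v) = 1 := by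
    rw [diagonal_mul_diagonal, ← diagonal_one]
    exact congrArg diagonal (funext fun i => inv_mul_cancel₀ (hsqrt i))
  apply inv_eq_right_inv
  rw [hconj]
  simp only [Matrix.mul_assoc]
  rw [← Matrix.mul_assoc (diagonal _) (diagonal _), hcancel, Matrix.one_mul,
    ← Matrix.mul_assoc (brownianCov v), brownianCov_mul_brownianPrecision hpos hmono,
    Matrix.one_mul, hcancel]

end Real

end BrownianGram

open BrownianGram Matrix Real

/-- Key step in the proof of Theorem 3 (Appendix A.2): for the normalized Brownian-motion
correlation matrix `M_{ij} = √(v_{min(i,j)}/v_{max(i,j)})` with `0 < v_1 < … < v_k`,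
every row sum of `M⁻¹` is nonnegative and all off-diagonal entries of `M⁻¹` are nonpositive. -/
theorem brownian_gram_inverse_diagonally_dominant
    (k : ℕ) (v : Fin k → ℝ) (hpos : ∀ i, 0 < v i) (hmono : StrictMono v)
    (M : Matrix (Fin k) (Fin k) ℝ)
    (hM : ∀ i j, M i j = Real.sqrt (v (min i j) / v (max i j))) :
    (∀ j, 0 ≤ M⁻¹.mulVec (fun _ => 1) j) ∧
      (∀ i j, i ≠ j → M⁻¹ i j ≤ 0) := by
  have hinv := inv_eq_diagonal_mul_brownianPrecision_mul_diagonal hpos hmono M hM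
  constructor
  · intro j
    have hones : diagonal (sqrt ∘ v) *ᵥ (fun _ => 1) = sqrt ∘ v := by
      ext i; rw [mulVec_diagonal, mul_one]
    rw [hinv, ← mulVec_mulVec, ← mulVec_mulVec, hones, mulVec_diagonal]
    exact mul_nonneg (sqrt_nonneg _) (brownianPrecision_mulVec_sqrt_nonneg hpos hmono j)
  · intro i j hij
    rw [hinv, mul_diagonal, diagonal_mul]
    exact mul_nonpos_of_nonpos_of_nonneg (mul_nonpos_of_nonneg_of_nonpos (sqrt_nonneg _)
      (brownianPrecision_apply_nonpos hpos hmono hij)) (sqrt_nonneg _)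
end

section
/- Let 0 < v_1 < v_2 < … < v_k be reals, let M be the k×k matrix with M_{ij} = √( v_{min(i,j)} / v_{max(i,j)} ), and let s ∈ {−1, +1}^k be any sign vector with S = diag(s). Then M is invertible and every entry of S M⁻¹ S 𝟙 is nonnegative: Σ_j s_i (M⁻¹)_{ij} s_j ≥ 0 for every i. Consequently the diagonal-dominance condition S_A (X_AᵀX_A)⁻¹ S_A 𝟙 ≥ 0 holds for every subset of piecewise constant (indicator) basis predictors and every choice of signs. -/
/-!
Put `v₋₁ := 0` and `a := √v`. Then `diag(a) M diag(a) = (v_{min(i,j)})` is the covariance matrix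
of Brownian motion at the times `v_i`, and taking first differences in both indices diagonalises
it: `W diag(a) M diag(a) Wᵀ = diag(v_i - v_{i-1})` for the first-difference matrix `W = 1 - L`
(`L` the lower shift).
Hence `M⁻¹ = diag(a) Wᵀ diag(v_i - v_{i-1})⁻¹ W diag(a)` is tridiagonal, and `(S M⁻¹ S 𝟙)_i` is a
contribution of the left neighbour, at least `a_i / (a_i + a_{i-1})`, plus one of the right
neighbour, at least `-a_i / (a_i + a_{i+1})`; the sum is nonnegative because `a_{i-1} < a_{i+1}`.
-/

open Matrix

section LowerShift

variable {R : Type*} [CommRing R] {k : ℕ}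

variable (R k) in
def lowerShift : Matrix (Fin k) (Fin k) R :=
  of fun i j => if (j : ℕ) + 1 = i then 1 else 0

theorem lowerShift_mulVec (g : ℕ → R) (hg : g 0 = 0) :
    lowerShift R k *ᵥ (fun i : Fin k => g (i + 1)) = fun i : Fin k => g i := by
  funext i
  simp only [mulVec, dotProduct, lowerShift, of_apply, ite_mul, one_mul, zero_mul]
  rcases Nat.eq_zero_or_pos (i : ℕ) with hi | hi
  · rw [hi, hg]
    exact Finset.sum_eq_zero fun j _ => if_neg (by omega)
  · rw [Finset.sum_eq_single ⟨i - 1, by omega⟩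
      (fun j _ hj => if_neg fun h => hj (Fin.ext (by simp only; omega))) (by simp)]
    simp only [Nat.sub_add_cancel hi, if_true]

theorem lowerShift_transpose_mulVec (g : ℕ → R) (hg : g k = 0) :
    (lowerShift R k)ᵀ *ᵥ (fun i : Fin k => g i) = fun i : Fin k => g (i + 1) := by
  funext i
  simp only [mulVec, dotProduct, transpose_apply, lowerShift, of_apply, ite_mul, one_mul,
    zero_mul]
  by_cases hi : (i : ℕ) + 1 < k
  · rw [Finset.sum_eq_single ⟨i + 1, hi⟩
      (fun j _ hj => if_neg fun h => hj (Fin.ext (by simp only; omega))) (by simp)]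
    simp
  · rw [show (i : ℕ) + 1 = k by omega, hg]
    exact Finset.sum_eq_zero fun j _ => if_neg (by omega)

theorem lowerShift_mul_of {n : Type*} (G : ℕ → n → R) (hG : G 0 = 0) :
    lowerShift R k * of (fun (i : Fin k) j => G (i + 1) j) = of fun (i : Fin k) j => G i j := by
  ext i j
  exact congrFun (lowerShift_mulVec (fun p => G p j) (congrFun hG j)) i

theorem of_mul_lowerShift_transpose {m : Type*} (G : m → ℕ → R) (hG : ∀ i, G i 0 = 0) :
    of (fun i (j : Fin k) => G i (j + 1)) * (lowerShift R k)ᵀ = of fun i (j : Fin k) => G i j := by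
  ext i j
  rw [mul_apply]
  simp_rw [transpose_apply, mul_comm (of _ i _)]
  exact congrFun (lowerShift_mulVec (G i) (hG i)) j

end LowerShift

theorem apply_min_mixed_sub {M : Type*} [AddCommGroup M] (u : ℕ → M) (l m : ℕ) :
    u (min (l + 1) (m + 1)) - u (min l (m + 1)) - (u (min (l + 1) m) - u (min l m)) =
      if l = m then u (l + 1) - u l else 0 := by
  rcases lt_trichotomy l m with h | rfl | h
  · rw [min_eq_left (by omega), min_eq_left (by omega), min_eq_left (by omega),
      min_eq_left h.le, if_neg h.ne, sub_self]
  · simp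
  · rw [min_eq_right (by omega), min_eq_right (by omega), min_eq_right (by omega),
      min_eq_right h.le, if_neg h.ne', sub_self, sub_self, sub_self]

theorem Matrix.mul_eq_one_of_mul_mul_transpose_eq_diagonal {K n : Type*} [Field K] [Fintype n]
    [DecidableEq n] {A B : Matrix n n K} {d : n → K} (h : B * A * Bᵀ = diagonal d)
    (hd : ∀ i, d i ≠ 0) : Bᵀ * diagonal d⁻¹ * B * A = 1 := by
  have h' : diagonal d⁻¹ * B * A * Bᵀ = 1 := by
    rw [mul_assoc (diagonal _ * B), mul_assoc (diagonal _), ← mul_assoc B, h,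
      diagonal_mul_diagonal, ← diagonal_one]
    exact congrArg diagonal (funext fun i => inv_mul_cancel₀ (hd i))
  rw [mul_eq_one_comm] at h'
  simpa only [mul_assoc] using h'

theorem sqrt_div_sqrt_add_sqrt_le_signed {p q s σ : ℝ} (hp : 0 ≤ p) (hpq : p < q)
    (hs : s = 1 ∨ s = -1) (hσ : |σ| ≤ 1) :
    √q / (√q + √p) ≤ s * √q * ((√q * s - √p * σ) / (q - p)) := by
  have hb : 0 ≤ √p := Real.sqrt_nonneg p
  have hbc : √p < √q := Real.sqrt_lt_sqrt hp hpq
  have hsσ : s * σ ≤ 1 := by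
    rcases hs with rfl | rfl <;> linarith [abs_le.1 hσ]
  have hss : s * s = 1 := by rcases hs with rfl | rfl <;> norm_num
  have hqp : q - p = (√q - √p) * (√q + √p) := by
    linear_combination -Real.mul_self_sqrt (hp.trans hpq.le) + Real.mul_self_sqrt hp
  have hsub : √q - √p ≠ 0 := (sub_pos.2 hbc).ne'
  have hadd : √q + √p ≠ 0 := by linarith
  calc √q / (√q + √p) = √q * (√q - √p) / (q - p) := by
        rw [hqp]
        field_simp
    _ ≤ (√q * √q - s * σ * (√p * √q)) / (q - p) := by
        gcongr
        nlinarith [mul_nonneg (mul_nonneg hb (hb.trans hbc.le)) (sub_nonneg.2 hsσ)]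
    _ = s * √q * ((√q * s - √p * σ) / (q - p)) := by
        rw [mul_div_assoc']
        congr 1
        linear_combination (-(√q * √q)) * hss

theorem signed_le_sqrt_div_sqrt_add_sqrt {q r s τ : ℝ} (hq : 0 ≤ q) (hqr : q < r)
    (hs : s = 1 ∨ s = -1) (hτ : |τ| ≤ 1) :
    s * √q * ((√r * τ - √q * s) / (r - q)) ≤ √q / (√q + √r) := by
  have hc : 0 ≤ √q := Real.sqrt_nonneg q
  have hce : √q < √r := Real.sqrt_lt_sqrt hq hqr
  have hsτ : s * τ ≤ 1 := by
    rcases hs with rfl | rfl <;> linarith [abs_le.1 hτ]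
  have hss : s * s = 1 := by rcases hs with rfl | rfl <;> norm_num
  have hrq : r - q = (√r - √q) * (√q + √r) := by
    linear_combination -Real.mul_self_sqrt (hq.trans hqr.le) + Real.mul_self_sqrt hq
  have hsub : √r - √q ≠ 0 := (sub_pos.2 hce).ne'
  have hadd : √q + √r ≠ 0 := by linarith
  calc s * √q * ((√r * τ - √q * s) / (r - q))
        = (s * τ * (√q * √r) - √q * √q) / (r - q) := by
        rw [mul_div_assoc']
        congr 1
        linear_combination (-(√q * √q)) * hss
    _ ≤ √q * (√r - √q) / (r - q) := by
        gcongr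
        nlinarith [mul_nonneg (mul_nonneg hc (hc.trans hce.le)) (sub_nonneg.2 hsτ)]
    _ = √q / (√q + √r) := by
        rw [hrq]
        field_simp

section LagSeq

variable {R : Type*} [Zero R] {k : ℕ}

/-- `lagSeq y p = y (p - 1)`, with `y (-1) = 0` (and `0` past the end). -/
def lagSeq (y : Fin k → R) : ℕ → R
  | 0 => 0
  | p + 1 => if h : p < k then y ⟨p, h⟩ else 0

@[simp]
theorem lagSeq_zero (y : Fin k → R) : lagSeq y 0 = 0 := rfl

@[simp]
theorem lagSeq_succ (y : Fin k → R) (i : Fin k) : lagSeq y (i + 1) = y i := by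
  simp [lagSeq]

theorem lagSeq_mem {y : Fin k → R} {S : Set R} (h0 : 0 ∈ S) (hy : ∀ i, y i ∈ S) (p : ℕ) :
    lagSeq y p ∈ S := by
  cases p with
  | zero => exact h0
  | succ p =>
    simp only [lagSeq]
    split_ifs
    exacts [hy _, h0]

theorem lagSeq_map₂ {R' R'' : Type*} [Zero R'] [Zero R''] (f : R → R' → R'') (hf : f 0 0 = 0)
    (y : Fin k → R) (z : Fin k → R') (p : ℕ) :
    lagSeq (fun i => f (y i) (z i)) p = f (lagSeq y p) (lagSeq z p) := by
  cases p with
  | zero => exact hf.symm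
  | succ p =>
    simp only [lagSeq]
    split_ifs <;> simp [hf]

end LagSeq

section BrownianGram

variable {k : ℕ} (v : Fin k → ℝ)

noncomputable def brownianFactor : Matrix (Fin k) (Fin k) ℝ :=
  (1 - lowerShift ℝ k) * diagonal fun i => √(v i)

def increment (l : Fin k) : ℝ := v l - lagSeq v l

noncomputable def diffQuotient (y : Fin k → ℝ) (p : ℕ) : ℝ :=
  if p < k then (lagSeq y (p + 1) - lagSeq y p) / (lagSeq v (p + 1) - lagSeq v p) else 0

variable {v}

theorem lagSeq_lt_self (hpos : ∀ i, 0 < v i) (hmono : StrictMono v) (i : Fin k) :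
    lagSeq v i < v i := by
  rcases Nat.eq_zero_or_pos (i : ℕ) with hi | hi
  · rw [hi, lagSeq_zero]
    exact hpos i
  · have hpred := lagSeq_succ v ⟨i - 1, by omega⟩
    simp only [Nat.sub_add_cancel hi] at hpred
    rw [hpred]
    exact hmono (Fin.lt_def.2 (by simp only; omega))

theorem increment_pos (hpos : ∀ i, 0 < v i) (hmono : StrictMono v) (l : Fin k) :
    0 < increment v l :=
  sub_pos.2 (lagSeq_lt_self hpos hmono l)

theorem diagonal_sqrt_mul_mul_diagonal_sqrt (hpos : ∀ i, 0 < v i)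
    {M : Matrix (Fin k) (Fin k) ℝ} (hM : ∀ i j, M i j = √(v (min i j) / v (max i j))) :
    diagonal (fun i => √(v i)) * M * diagonal (fun i => √(v i)) =
      of fun i j : Fin k => lagSeq v (min (i + 1) (j + 1)) := by
  ext i j
  have hv := fun i => Real.sqrt_pos.2 (hpos i)
  rw [mul_diagonal, diagonal_mul, hM, of_apply, min_add_add_right, ← Fin.coe_min, lagSeq_succ]
  rcases le_total i j with hij | hij
  · rw [min_eq_left hij, max_eq_right hij, Real.sqrt_div (hpos i).le]
    field_simp [(hv j).ne']
    exact Real.sq_sqrt (hpos i).le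
  · rw [min_eq_right hij, max_eq_left hij, Real.sqrt_div (hpos j).le]
    field_simp [(hv i).ne']
    exact Real.sq_sqrt (hpos j).le

theorem brownianFactor_mul_mul_transpose (hpos : ∀ i, 0 < v i)
    {M : Matrix (Fin k) (Fin k) ℝ} (hM : ∀ i j, M i j = √(v (min i j) / v (max i j))) :
    brownianFactor v * M * (brownianFactor v)ᵀ = diagonal (increment v) := by
  have hC := diagonal_sqrt_mul_mul_diagonal_sqrt hpos hM
  have hassoc : brownianFactor v * M * (brownianFactor v)ᵀ = (1 - lowerShift ℝ k) *
      (diagonal (fun i => √(v i)) * M * diagonal (fun i => √(v i))) * (1 - lowerShift ℝ k)ᵀ := by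
    simp only [brownianFactor, transpose_mul, diagonal_transpose, mul_assoc]
  rw [hassoc, hC, sub_mul, one_mul,
    lowerShift_mul_of (fun p (j : Fin k) => lagSeq v (min p (j + 1))) (funext fun _ => rfl),
    transpose_sub, transpose_one, mul_sub, mul_one]
  have hdiff : ((of fun i j : Fin k => lagSeq v (min (i + 1) (j + 1))) -
      of fun i j : Fin k => lagSeq v (min (i : ℕ) (j + 1))) =
      of fun (i j : Fin k) => lagSeq v (min ((i : ℕ) + 1) (j + 1)) - lagSeq v (min (i : ℕ) (j + 1)) :=
    rfl
  rw [hdiff, of_mul_lowerShift_transpose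
    (fun (i : Fin k) q => lagSeq v (min ((i : ℕ) + 1) q) - lagSeq v (min (i : ℕ) q))
    (fun _ => by simp)]
  ext i j
  simp only [Matrix.sub_apply, of_apply, apply_min_mixed_sub, diagonal_apply, Fin.ext_iff,
    increment, lagSeq_succ]

theorem brownianFactor_inverse_mulVec (s : Fin k → ℝ) :
    ((brownianFactor v)ᵀ * diagonal (increment v)⁻¹ * brownianFactor v) *ᵥ s =
      fun i => √(v i) * (diffQuotient v (fun j => √(v j) * s j) i -
        diffQuotient v (fun j => √(v j) * s j) (i + 1)) := by
  set y : Fin k → ℝ := fun j => √(v j) * s j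
  have hy : (diagonal fun i => √(v i)) *ᵥ s = fun i : Fin k => lagSeq y (i + 1) :=
    funext fun i => by simp [mulVec_diagonal, y]
  have hB : brownianFactor v *ᵥ s = fun l : Fin k => lagSeq y (l + 1) - lagSeq y l := by
    rw [brownianFactor, ← mulVec_mulVec, sub_mulVec, one_mulVec, hy,
      lowerShift_mulVec _ (lagSeq_zero y)]
    rfl
  have hz : diagonal (increment v)⁻¹ *ᵥ brownianFactor v *ᵥ s =
      fun l : Fin k => diffQuotient v y l :=
    funext fun l => by
      simp [hB, mulVec_diagonal, diffQuotient, increment, div_eq_inv_mul]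
  rw [← mulVec_mulVec, ← mulVec_mulVec, hz, brownianFactor, transpose_mul, diagonal_transpose,
    ← mulVec_mulVec, transpose_sub, transpose_one, sub_mulVec, one_mulVec,
    lowerShift_transpose_mulVec (diffQuotient v y) (if_neg (lt_irrefl k))]
  funext i
  simp only [mulVec_diagonal, Pi.sub_apply]

theorem signed_mul_diffQuotient_nonneg (hpos : ∀ i, 0 < v i) (hmono : StrictMono v)
    {s : Fin k → ℝ} (hs : ∀ i, s i = 1 ∨ s i = -1) (i : Fin k) :
    0 ≤ s i * (√(v i) * (diffQuotient v (fun j => √(v j) * s j) i -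
      diffQuotient v (fun j => √(v j) * s j) (i + 1))) := by
  set y : Fin k → ℝ := fun j => √(v j) * s j
  have hs_abs : ∀ j, |s j| ≤ 1 := fun j => by rcases hs j with h | h <;> simp [h]
  have hprev_nonneg : 0 ≤ lagSeq v i :=
    lagSeq_mem (S := Set.Ici 0) (y := v) Set.self_mem_Ici (fun j => (hpos j).le) i
  have hprev_lt := lagSeq_lt_self hpos hmono i
  have hleft : √(v i) / (√(v i) + √(lagSeq v i)) ≤ s i * √(v i) * diffQuotient v y i := by
    have hq : diffQuotient v y i =
        (√(v i) * s i - √(lagSeq v i) * lagSeq s i) / (v i - lagSeq v i) := by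
      simp only [diffQuotient, i.isLt, if_true, lagSeq_succ, y,
        lagSeq_map₂ (fun x t => √x * t) (by simp)]
    rw [hq]
    exact sqrt_div_sqrt_add_sqrt_le_signed hprev_nonneg hprev_lt (hs i)
      (lagSeq_mem (S := {x : ℝ | |x| ≤ 1}) (y := s) (by simp) hs_abs i)
  rw [mul_sub, mul_sub, ← mul_assoc, ← mul_assoc, sub_nonneg]
  by_cases hnext : (i : ℕ) + 1 < k
  · set j : Fin k := ⟨i + 1, hnext⟩
    have hij : v i < v j := hmono (Fin.lt_def.2 (Nat.lt_succ_self i))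
    have hq : diffQuotient v y (i + 1) = (√(v j) * s j - √(v i) * s i) / (v j - v i) := by
      simp [diffQuotient, lagSeq, hnext, y, j]
    have hright : s i * √(v i) * diffQuotient v y (i + 1) ≤ √(v i) / (√(v i) + √(v j)) := by
      rw [hq]
      exact signed_le_sqrt_div_sqrt_add_sqrt (hpos i).le hij (hs i) (hs_abs j)
    refine hright.trans (le_trans ?_ hleft)
    have hc : 0 < √(v i) := Real.sqrt_pos.2 (hpos i)
    exact div_le_div_of_nonneg_left hc.le (add_pos_of_pos_of_nonneg hc (Real.sqrt_nonneg _))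
      (add_le_add_right (Real.sqrt_le_sqrt (hprev_lt.trans hij).le) _)
  · rw [diffQuotient, if_neg hnext, mul_zero]
    exact (by positivity : (0 : ℝ) ≤ _).trans hleft

end BrownianGram

/-- Theorem 3 of the paper (diagonal dominance for piecewise constant bases): for the
normalized Brownian-motion correlation matrix `M_{ij} = √(v_{min(i,j)}/v_{max(i,j)})` with
`0 < v_1 < … < v_k` (the Gram matrix of any signed subset of standardized indicator
predictors) and any sign vector `s ∈ {−1,+1}^k`, `M` is invertible and every entry of
`S M⁻¹ S 𝟙` is nonnegative. -/
theorem brownian_gram_sign_diagonal_dominance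
    (k : ℕ) (v : Fin k → ℝ) (hpos : ∀ i, 0 < v i) (hmono : StrictMono v)
    (M : Matrix (Fin k) (Fin k) ℝ)
    (hM : ∀ i j, M i j = Real.sqrt (v (min i j) / v (max i j)))
    (s : Fin k → ℝ) (hs : ∀ i, s i = 1 ∨ s i = -1) :
    IsUnit M.det ∧ ∀ i, 0 ≤ ∑ j, s i * M⁻¹ i j * s j := by
  have hleft := mul_eq_one_of_mul_mul_transpose_eq_diagonal
    (brownianFactor_mul_mul_transpose hpos hM) fun l => (increment_pos hpos hmono l).ne'
  refine ⟨isUnit_det_of_left_inverse hleft, fun i => ?_⟩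
  have hrow : ∑ j, s i * M⁻¹ i j * s j = s i * (M⁻¹ *ᵥ s) i := by
    simp only [mulVec, dotProduct, Finset.mul_sum, mul_assoc]
  rw [hrow, inv_eq_left_inv hleft, brownianFactor_inverse_mulVec]
  exact signed_mul_diffQuotient_nonneg hpos hmono hs i
end
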